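/- arXiv:1905.02800 — 6 statements merged into one kernel-verified Lean document; each statement's English description precedes it below -/
import Mathlib

section
/- Let W > δ, let S be any schedule, and let (M*, α*) be a configuration such that for every configuration (M, α) one has f_S((M, α))/(α + δ) ≤ f_S((M*, α*))/(α* + δ). Then for every schedule O that is feasible for window W − δ, f_S((M*, α*)) ≥ ((α* + δ)/(W − δ))·(f(O) − f(S)). -/
open Finset

noncomputable section
open scoped Classical

/-- A matching in the complete bipartite graph on `A × B`: no two distinct edges
share a first coordinate or a second coordinate. -/
def IsMatching {A B : Type*} (M : Finset (A × B)) : Prop :=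
  ∀ e ∈ M, ∀ e' ∈ M, e ≠ e' → e.1 ≠ e'.1 ∧ e.2 ≠ e'.2

/-- The data sent by a schedule `S` (a finite set of configurations `(M, α)`)
for a demand matrix `D`: `f(S) = Σ_e min(D_e, Σ_{(M,α)∈S, e∈M} α)`. -/
def sentData {A B : Type*} [Fintype A] [Fintype B] (D : A × B → ℝ)
    (S : Finset (Finset (A × B) × ℝ)) : ℝ :=
  ∑ e : A × B, min (D e) (∑ c ∈ S.filter (fun c => e ∈ c.1), c.2)

/-- The total time of a schedule: `Σ_{(M,α)∈S} (α + δ)`. -/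
def totalTime {A B : Type*} (δ : ℝ) (S : Finset (Finset (A × B) × ℝ)) : ℝ :=
  ∑ c ∈ S, (c.2 + δ)

/-- A valid schedule: every element is a configuration, i.e. a matching together
with a nonnegative duration. -/
def ValidSchedule {A B : Type*} (S : Finset (Finset (A × B) × ℝ)) : Prop :=
  ∀ c ∈ S, IsMatching c.1 ∧ 0 ≤ c.2

/-- The marginal gain `f_S((M, α)) = f(S ∪ {(M, α)}) − f(S)` of a configuration
with respect to a schedule `S`. -/
def gain {A B : Type*} [Fintype A] [Fintype B] (D : A × B → ℝ)
    (S : Finset (Finset (A × B) × ℝ)) (c : Finset (A × B) × ℝ) : ℝ :=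
  sentData D (insert c S) - sentData D S

/-! The gain per unit time of the greedy choice bounds that of every configuration of `O`, and
the gains with respect to `S` of the configurations of `O` add up to at least `f(O) − f(S)`,
because `f` is monotone and submodular: on each edge it is `min(D_e, ·)`, a concave function,
applied to the time the edge is served. Summing over `O`, whose total time is at most `W − δ`,
gives `f(O) − f(S) ≤ (W − δ) · f_S((M*, α*)) / (α* + δ)`. -/

lemma min_add_sub_min_le_of_le {d a b x : ℝ} (hab : a ≤ b) (hx : 0 ≤ x) :
    min d (b + x) - min d b ≤ min d (a + x) - min d a := by
  simp only [min_def]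
  split_ifs <;> linarith

section Schedule

variable {A B : Type*}

def load (S : Finset (Finset (A × B) × ℝ)) (e : A × B) : ℝ :=
  ∑ c ∈ S.filter (fun c => e ∈ c.1), c.2

lemma load_mono {S T : Finset (Finset (A × B) × ℝ)} (hST : S ⊆ T) (hT : ∀ c ∈ T, 0 ≤ c.2)
    (e : A × B) : load S e ≤ load T e :=
  sum_le_sum_of_subset_of_nonneg (filter_subset_filter _ hST)
    fun c hc _ => hT c (mem_filter.mp hc).1

lemma load_insert {S : Finset (Finset (A × B) × ℝ)} {c : Finset (A × B) × ℝ} (hc : c ∉ S)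
    (e : A × B) : load (insert c S) e = load S e + if e ∈ c.1 then c.2 else 0 := by
  unfold load
  rw [filter_insert]
  split_ifs with he
  · rw [sum_insert fun h => hc (mem_filter.mp h).1, add_comm]
  · rw [add_zero]

variable [Fintype A] [Fintype B] (D : A × B → ℝ)

lemma sentData_eq_sum_min_load (S : Finset (Finset (A × B) × ℝ)) :
    sentData D S = ∑ e, min (D e) (load S e) :=
  rfl

lemma sentData_mono {S T : Finset (Finset (A × B) × ℝ)} (hST : S ⊆ T)
    (hT : ∀ c ∈ T, 0 ≤ c.2) : sentData D S ≤ sentData D T :=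
  sum_le_sum fun e _ => min_le_min le_rfl (load_mono hST hT e)

lemma gain_nonneg {S : Finset (Finset (A × B) × ℝ)} (hS : ∀ c ∈ S, 0 ≤ c.2)
    {c : Finset (A × B) × ℝ} (hc : 0 ≤ c.2) : 0 ≤ gain D S c := by
  refine sub_nonneg.mpr (sentData_mono D (subset_insert c S) fun d hd => ?_)
  rcases mem_insert.mp hd with rfl | hd
  exacts [hc, hS d hd]

lemma gain_eq_sum_of_not_mem {S : Finset (Finset (A × B) × ℝ)} {c : Finset (A × B) × ℝ}
    (hc : c ∉ S) :
    gain D S c =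
      ∑ e, (min (D e) (load S e + if e ∈ c.1 then c.2 else 0) - min (D e) (load S e)) := by
  simp only [gain, sentData_eq_sum_min_load, load_insert hc, sum_sub_distrib]

lemma gain_antitone {S T : Finset (Finset (A × B) × ℝ)} (hST : S ⊆ T)
    (hT : ∀ c ∈ T, 0 ≤ c.2) {c : Finset (A × B) × ℝ} (hc : 0 ≤ c.2) :
    gain D T c ≤ gain D S c := by
  by_cases hcT : c ∈ T
  · rw [gain, insert_eq_self.mpr hcT, sub_self]
    exact gain_nonneg D (fun d hd => hT d (hST hd)) hc
  rw [gain_eq_sum_of_not_mem D hcT, gain_eq_sum_of_not_mem D fun h => hcT (hST h)]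
  refine sum_le_sum fun e _ => ?_
  split_ifs
  · exact min_add_sub_min_le_of_le (load_mono hST hT e) hc
  · simp

lemma sentData_union_sub_le_sum_gain {S : Finset (Finset (A × B) × ℝ)}
    (hS : ∀ c ∈ S, 0 ≤ c.2) {O : Finset (Finset (A × B) × ℝ)} (hO : ∀ c ∈ O, 0 ≤ c.2) :
    sentData D (S ∪ O) - sentData D S ≤ ∑ c ∈ O, gain D S c := by
  induction O using Finset.induction_on with
  | empty => simp
  | @insert c O hcO ih =>
    have hSO : ∀ d ∈ S ∪ O, 0 ≤ d.2 := by
      simp only [mem_union]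
      rintro d (hd | hd)
      exacts [hS d hd, hO d (mem_insert_of_mem hd)]
    have hc := hO c (mem_insert_self c O)
    have hstep := gain_antitone D subset_union_left hSO hc
    rw [union_insert, sum_insert hcO]
    rw [gain] at hstep
    linarith [ih fun d hd => hO d (mem_insert_of_mem hd)]

lemma sentData_sub_le_sum_gain {S O : Finset (Finset (A × B) × ℝ)}
    (hS : ∀ c ∈ S, 0 ≤ c.2) (hO : ∀ c ∈ O, 0 ≤ c.2) :
    sentData D O - sentData D S ≤ ∑ c ∈ O, gain D S c := by
  have hSO : ∀ d ∈ S ∪ O, 0 ≤ d.2 := by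
    simp only [mem_union]
    rintro d (hd | hd)
    exacts [hS d hd, hO d hd]
  linarith [sentData_mono D subset_union_right hSO, sentData_union_sub_le_sum_gain D hS hO]

end Schedule

theorem greedy_step_gain_general {A B : Type*} [Fintype A] [Fintype B]
    (D : A × B → ℝ) (δ W : ℝ) (hδ : 0 < δ) (hW : δ < W)
    (S : Finset (Finset (A × B) × ℝ)) (hS : ValidSchedule S)
    (Mstar : Finset (A × B)) (αstar : ℝ) (hαstar : 0 ≤ αstar)
    (hbest : ∀ (M : Finset (A × B)) (α : ℝ), IsMatching M → 0 ≤ α →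
      gain D S (M, α) / (α + δ) ≤ gain D S (Mstar, αstar) / (αstar + δ)) :
    ∀ O : Finset (Finset (A × B) × ℝ), ValidSchedule O → totalTime δ O ≤ W - δ →
      gain D S (Mstar, αstar) ≥ ((αstar + δ) / (W - δ)) * (sentData D O - sentData D S) := by
  intro O hO hOtime
  have hS_nonneg : ∀ c ∈ S, 0 ≤ c.2 := fun c hc => (hS c hc).2
  have hstar : 0 < αstar + δ := by linarith
  set ρ := gain D S (Mstar, αstar) / (αstar + δ)
  have hρ : 0 ≤ ρ := div_nonneg (gain_nonneg D hS_nonneg hαstar) hstar.le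
  have hgain_le : ∀ c ∈ O, gain D S c ≤ (c.2 + δ) * ρ := fun c hc => by
    rw [mul_comm, ← div_le_iff₀ (by linarith [(hO c hc).2])]
    exact hbest c.1 c.2 (hO c hc).1 (hO c hc).2
  have hbound : sentData D O - sentData D S ≤ (W - δ) * ρ :=
    calc sentData D O - sentData D S
        ≤ ∑ c ∈ O, gain D S c := sentData_sub_le_sum_gain D hS_nonneg fun c hc => (hO c hc).2
      _ ≤ ∑ c ∈ O, (c.2 + δ) * ρ := sum_le_sum hgain_le
      _ = totalTime δ O * ρ := (sum_mul O _ ρ).symm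
      _ ≤ (W - δ) * ρ := mul_le_mul_of_nonneg_right hOtime hρ
  calc (αstar + δ) / (W - δ) * (sentData D O - sentData D S)
      ≤ (αstar + δ) / (W - δ) * ((W - δ) * ρ) :=
        mul_le_mul_of_nonneg_left hbound (div_nonneg hstar.le (by linarith))
    _ = (αstar + δ) * ρ := by field_simp [(by linarith : W - δ ≠ 0)]
    _ = gain D S (Mstar, αstar) := mul_div_cancel₀ _ hstar.ne'

/-- If `(M*, α*)` maximizes marginal gain per unit time with respect to `S`, then for
every schedule `O` feasible for window `W − δ`,
`f_S((M*, α*)) ≥ ((α* + δ)/(W − δ)) · (f(O) − f(S))`. -/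
theorem greedy_step_gain {A B : Type*} [Fintype A] [Fintype B]
    (D : A × B → ℝ) (hD : ∀ e, 0 ≤ D e) (δ W : ℝ) (hδ : 0 < δ) (hW : δ < W)
    (S : Finset (Finset (A × B) × ℝ)) (hS : ValidSchedule S)
    (Mstar : Finset (A × B)) (αstar : ℝ) (hMstar : IsMatching Mstar) (hαstar : 0 ≤ αstar)
    (hbest : ∀ (M : Finset (A × B)) (α : ℝ), IsMatching M → 0 ≤ α →
      gain D S (M, α) / (α + δ) ≤ gain D S (Mstar, αstar) / (αstar + δ)) :
    ∀ O : Finset (Finset (A × B) × ℝ), ValidSchedule O → totalTime δ O ≤ W - δ →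
      gain D S (Mstar, αstar) ≥ ((αstar + δ) / (W - δ)) * (sentData D O - sentData D S) :=
  greedy_step_gain_general D δ W hδ hW S hS Mstar αstar hαstar hbest
end
end

section
/- Let Φ ≥ 0 and B > 0 be real numbers, let 0 = s_0 ≤ s_1 ≤ … ≤ s_r be a nondecreasing sequence of reals, and let c_1, …, c_r ≥ 0 be reals with Σ_{i=1}^r c_i ≥ B. If for every i ∈ {1, …, r} one has s_i − s_{i−1} ≥ (c_i/B)·(Φ − s_{i−1}), then s_r ≥ (1 − 1/e)·Φ. -/
open Finset

/-- The real-number recurrence underlying the greedy analysis: if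
`0 = s₀ ≤ s₁ ≤ … ≤ s_r`, the costs `cᵢ ≥ 0` satisfy `Σᵢ cᵢ ≥ B`, and
`sᵢ − s_{i−1} ≥ (cᵢ/B)(Φ − s_{i−1})` for all `i`, then `s_r ≥ (1 − 1/e)·Φ`. -/
theorem greedy_recurrence (Φ B : ℝ) (hΦ : 0 ≤ Φ) (hB : 0 < B)
    (r : ℕ) (s : ℕ → ℝ) (c : ℕ → ℝ)
    (hs0 : s 0 = 0)
    (hmono : ∀ i, 1 ≤ i → i ≤ r → s (i - 1) ≤ s i)
    (hc : ∀ i, 1 ≤ i → i ≤ r → 0 ≤ c i)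
    (hsum : B ≤ ∑ i ∈ Finset.Icc 1 r, c i)
    (hrec : ∀ i, 1 ≤ i → i ≤ r → s i - s (i - 1) ≥ (c i / B) * (Φ - s (i - 1))) :
    s r ≥ (1 - 1 / Real.exp 1) * Φ := by
  have key : ∀ i, i ≤ r → Φ - s i ≤ Φ * Real.exp (-(∑ j ∈ Icc 1 i, c j) / B) := by
    intro i
    induction i with
    | zero => intro _; simp [hs0]
    | succ n ih =>
      intro hn
      have hn' : n ≤ r := Nat.le_of_succ_le hn
      have ihn := ih hn'
      have h1 : (1 : ℕ) ≤ n + 1 := Nat.le_add_left 1 n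
      have hrec' := hrec (n + 1) h1 hn
      have hmono' := hmono (n + 1) h1 hn
      simp only [Nat.add_sub_cancel] at hrec' hmono'
      have hstep : ∑ j ∈ Icc 1 (n + 1), c j = (∑ j ∈ Icc 1 n, c j) + c (n + 1) := by
        rw [Finset.sum_Icc_succ_top (by omega)]
      by_cases hcase : Φ - s (n + 1) ≤ 0
      · calc Φ - s (n + 1) ≤ 0 := hcase
          _ ≤ _ := by positivity
      · push_neg at hcase
        have hpos : 0 < Φ - s n := by linarith
        have e1 : Φ - s (n + 1) ≤ (Φ - s n) * (1 - c (n + 1) / B) := by nlinarith [hrec']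
        have e2 : (1 - c (n + 1) / B) ≤ Real.exp (-(c (n + 1) / B)) := by
          linarith [Real.add_one_le_exp (-(c (n + 1) / B))]
        have e3 : (Φ - s n) * (1 - c (n + 1) / B) ≤ (Φ - s n) * Real.exp (-(c (n + 1) / B)) :=
          mul_le_mul_of_nonneg_left e2 hpos.le
        have e4 : (Φ - s n) * Real.exp (-(c (n + 1) / B)) ≤
            Φ * Real.exp (-(∑ j ∈ Icc 1 n, c j) / B) * Real.exp (-(c (n + 1) / B)) :=
          mul_le_mul_of_nonneg_right ihn (Real.exp_pos _).le
        have e5 : Φ * Real.exp (-(∑ j ∈ Icc 1 n, c j) / B) * Real.exp (-(c (n + 1) / B)) =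
            Φ * Real.exp (-(∑ j ∈ Icc 1 (n + 1), c j) / B) := by
          rw [hstep, mul_assoc, ← Real.exp_add]
          ring_nf
        linarith
  have hk := key r le_rfl
  have hge1 : (1 : ℝ) ≤ (∑ j ∈ Icc 1 r, c j) / B := (one_le_div hB).mpr hsum
  have hexp : Real.exp (-(∑ j ∈ Icc 1 r, c j) / B) ≤ Real.exp (-1) := by
    apply Real.exp_le_exp.mpr; rw [neg_div]; linarith
  have : Φ * Real.exp (-(∑ j ∈ Icc 1 r, c j) / B) ≤ Φ * Real.exp (-1) :=
    mul_le_mul_of_nonneg_left hexp hΦ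
  rw [Real.exp_neg] at this
  have h2 : s r ≥ Φ - Φ * (Real.exp 1)⁻¹ := by linarith
  rw [one_div]
  linarith [h2]
end

section
/- The online greedy algorithm without delay is 1/2-competitive: let E_1, …, E_T be the arriving edge multisets, define R_0 = ∅ and, for t = 1, …, T, let M_t be a maximum-cardinality matching among matchings contained in the support of R_{t−1} + E_t, and R_t = (R_{t−1} + E_t) − M_t (multiset difference removing one copy of each edge of M_t). Then for every feasible solution O_1, …, O_T, Σ_{t=1}^T |M_t| ≥ (1/2)·Σ_{t=1}^T |O_t|. -/
open Finset

noncomputable section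
open scoped Classical

/-- The online greedy algorithm without delay is `1/2`-competitive: picking at each
step a maximum matching in the remaining edges and removing it, the total number of
edges sent is at least half of that of any feasible solution. -/
theorem online_greedy_half_competitive {A B : Type*} [Fintype A] [Fintype B]
    (T : ℕ) (Edem : ℕ → Multiset (A × B))
    (M : ℕ → Finset (A × B)) (R : ℕ → Multiset (A × B))
    (hR0 : R 0 = 0)
    (hMmatch : ∀ t ∈ Finset.Icc 1 T, IsMatching (M t))
    (hMsub : ∀ t ∈ Finset.Icc 1 T, M t ⊆ (R (t - 1) + Edem t).toFinset)
    (hMmax : ∀ t ∈ Finset.Icc 1 T, ∀ M' : Finset (A × B),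
      IsMatching M' → M' ⊆ (R (t - 1) + Edem t).toFinset → M'.card ≤ (M t).card)
    (hR : ∀ t ∈ Finset.Icc 1 T, R t = (R (t - 1) + Edem t) - (M t).val)
    (O : ℕ → Finset (A × B))
    (hOmatch : ∀ t ∈ Finset.Icc 1 T, IsMatching (O t))
    (hOfeas : ∀ t ∈ Finset.Icc 1 T, ∀ e : A × B,
      (∑ s ∈ Finset.Icc 1 t, if e ∈ O s then 1 else 0) ≤
        (∑ s ∈ Finset.Icc 1 t, Edem s).count e) :
    (∑ t ∈ Finset.Icc 1 T, ((M t).card : ℝ)) ≥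
      (1 / 2) * ∑ t ∈ Finset.Icc 1 T, ((O t).card : ℝ) := by
  -- M t as a multiset is ≤ the available multiset
  have hMle : ∀ t ∈ Finset.Icc 1 T, (M t).val ≤ R (t - 1) + Edem t := by
    intro t ht
    rw [Multiset.le_iff_count]
    intro e
    by_cases he : e ∈ M t
    · have h1 : (M t).val.count e = 1 := Multiset.count_eq_one_of_mem (M t).nodup he
      have h2 : e ∈ (R (t - 1) + Edem t).toFinset := hMsub t ht he
      rw [Multiset.mem_toFinset, ← Multiset.count_pos] at h2
      omega
    · have : e ∉ (M t).val := he
      simp [Multiset.count_eq_zero_of_notMem this]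
  -- invariant : R t + Σ M = Σ Edem
  have hRsum : ∀ t, t ≤ T → R t + ∑ s ∈ Finset.Icc 1 t, (M s).val
      = ∑ s ∈ Finset.Icc 1 t, Edem s := by
    intro t
    induction t with
    | zero => intro _; simp [hR0]
    | succ n ih =>
      intro h
      have hn := ih (by omega)
      have hmem : n + 1 ∈ Finset.Icc 1 T := by simp; omega
      have h1 : (1 : ℕ) ≤ n + 1 := by omega
      rw [Finset.sum_Icc_succ_top h1, Finset.sum_Icc_succ_top h1, ← hn]
      have hRt := hR (n + 1) hmem
      simp only [Nat.add_sub_cancel] at hRt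
      have hle := hMle (n + 1) hmem
      simp only [Nat.add_sub_cancel] at hle
      rw [hRt, ← add_assoc, add_comm (((R n + Edem (n+1)) - (M (n+1)).val))
        (∑ s ∈ Finset.Icc 1 n, (M s).val), add_assoc,
        tsub_add_cancel_of_le hle]
      abel
  -- count of a finset's multiset
  have hcnt : ∀ (s : Finset (A × B)) (e : A × B),
      s.val.count e = if e ∈ s then 1 else 0 := by
    intro s e
    by_cases he : e ∈ s
    · simp [he, Multiset.count_eq_one_of_mem s.nodup he]
    · simp [he, Multiset.count_eq_zero_of_notMem he]
  -- count identity for an edge unavailable at time t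
  have hcount : ∀ t ∈ Finset.Icc 1 T, ∀ e : A × B,
      e ∉ (R (t - 1) + Edem t).toFinset →
      (∑ s ∈ Finset.Icc 1 t, Edem s).count e
        = ∑ s ∈ Finset.Icc 1 (t - 1), (if e ∈ M s then 1 else 0) := by
    intro t ht e he
    rw [Finset.mem_Icc] at ht
    obtain ⟨n, rfl⟩ : ∃ n, t = n + 1 := ⟨t - 1, by omega⟩
    simp only [Nat.add_sub_cancel] at he ⊢
    have h0 : (R n + Edem (n + 1)).count e = 0 :=
      Multiset.count_eq_zero.mpr (fun hmem => he (Multiset.mem_toFinset.mpr hmem))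
    rw [Finset.sum_Icc_succ_top (by omega : (1:ℕ) ≤ n + 1),
      ← hRsum n (by omega)]
    rw [show R n + ∑ s ∈ Finset.Icc 1 n, (M s).val + Edem (n + 1)
        = (R n + Edem (n + 1)) + ∑ s ∈ Finset.Icc 1 n, (M s).val by abel]
    rw [Multiset.count_add, h0, zero_add, Multiset.count_sum']
    exact Finset.sum_congr rfl fun s _ => hcnt (M s) e
  -- per-edge charging for unavailable edges
  have perEdge : ∀ e : A × B,
      (∑ t ∈ Finset.Icc 1 T,
        if e ∈ O t ∧ e ∉ (R (t - 1) + Edem t).toFinset then 1 else 0)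
      ≤ ∑ t ∈ Finset.Icc 1 T, (if e ∈ M t then 1 else 0) := by
    intro e
    by_cases hFne : ((Finset.Icc 1 T).filter
        (fun t => e ∈ O t ∧ e ∉ (R (t - 1) + Edem t).toFinset)).Nonempty
    · obtain ⟨t₀, ht₀mem, ht₀max⟩ : ∃ t₀ ∈ (Finset.Icc 1 T).filter
          (fun t => e ∈ O t ∧ e ∉ (R (t - 1) + Edem t).toFinset),
          ∀ t ∈ (Finset.Icc 1 T).filter
            (fun t => e ∈ O t ∧ e ∉ (R (t - 1) + Edem t).toFinset), t ≤ t₀ :=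
        ⟨_, Finset.max'_mem _ hFne, fun t ht => Finset.le_max' _ t ht⟩
      rw [Finset.mem_filter] at ht₀mem
      obtain ⟨ht₀Icc, ht₀O, ht₀un⟩ := ht₀mem
      rw [Finset.mem_Icc] at ht₀Icc
      have step1 : (∑ t ∈ Finset.Icc 1 T,
          if e ∈ O t ∧ e ∉ (R (t - 1) + Edem t).toFinset then 1 else 0)
          ≤ ∑ s ∈ Finset.Icc 1 t₀, (if e ∈ O s then 1 else 0) := by
        have hA : (∑ t ∈ Finset.Icc 1 T,
            if e ∈ O t ∧ e ∉ (R (t - 1) + Edem t).toFinset then 1 else 0)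
            ≤ ∑ t ∈ Finset.Icc 1 T, (if t ≤ t₀ ∧ e ∈ O t then 1 else 0) := by
          apply Finset.sum_le_sum
          intro t ht
          by_cases hcond : e ∈ O t ∧ e ∉ (R (t - 1) + Edem t).toFinset
          · have hle : t ≤ t₀ := ht₀max t (Finset.mem_filter.mpr ⟨ht, hcond⟩)
            rw [if_pos hcond, if_pos ⟨hle, hcond.1⟩]
          · rw [if_neg hcond]
            exact Nat.zero_le _
        have hB : (∑ t ∈ Finset.Icc 1 t₀, (if t ≤ t₀ ∧ e ∈ O t then 1 else 0))
            = ∑ t ∈ Finset.Icc 1 T, (if t ≤ t₀ ∧ e ∈ O t then 1 else 0) := by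
          apply Finset.sum_subset
            (Finset.Icc_subset_Icc_right ht₀Icc.2 : Finset.Icc 1 t₀ ⊆ Finset.Icc 1 T)
          intro x hxT hx
          rw [Finset.mem_Icc] at hx hxT
          have hnx : ¬ (x ≤ t₀ ∧ e ∈ O x) := fun h => hx ⟨hxT.1, h.1⟩
          rw [if_neg hnx]
        have hC : (∑ t ∈ Finset.Icc 1 t₀, (if t ≤ t₀ ∧ e ∈ O t then 1 else 0))
            = ∑ s ∈ Finset.Icc 1 t₀, (if e ∈ O s then 1 else 0) := by
          apply Finset.sum_congr rfl
          intro s hs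
          rw [Finset.mem_Icc] at hs
          simp only [hs.2, true_and]
        omega
      have step2 := hOfeas t₀ (Finset.mem_Icc.mpr ht₀Icc) e
      have step3 := hcount t₀ (Finset.mem_Icc.mpr ht₀Icc) e ht₀un
      have step4 : (∑ s ∈ Finset.Icc 1 (t₀ - 1), (if e ∈ M s then 1 else 0))
          ≤ ∑ t ∈ Finset.Icc 1 T, (if e ∈ M t then 1 else 0) :=
        Finset.sum_le_sum_of_subset
          (Finset.Icc_subset_Icc_right (by omega))
      omega
    · have : (∑ t ∈ Finset.Icc 1 T,
          if e ∈ O t ∧ e ∉ (R (t - 1) + Edem t).toFinset then 1 else 0) = 0 := by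
        apply Finset.sum_eq_zero
        intro t ht
        by_cases hcond : e ∈ O t ∧ e ∉ (R (t - 1) + Edem t).toFinset
        · exact absurd ⟨t, Finset.mem_filter.mpr ⟨ht, hcond⟩⟩ hFne
        · rw [if_neg hcond]
      omega
  -- main natural-number inequality
  have main : (∑ t ∈ Finset.Icc 1 T, (O t).card)
      ≤ 2 * ∑ t ∈ Finset.Icc 1 T, (M t).card := by
    have split : ∀ t ∈ Finset.Icc 1 T, (O t).card
        = ((O t).filter (fun e => e ∈ (R (t - 1) + Edem t).toFinset)).card
          + ((O t).filter (fun e => e ∉ (R (t - 1) + Edem t).toFinset)).card := by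
      intro t _
      exact (Finset.card_filter_add_card_filter_not _).symm
    have part1 : (∑ t ∈ Finset.Icc 1 T,
        ((O t).filter (fun e => e ∈ (R (t - 1) + Edem t).toFinset)).card)
        ≤ ∑ t ∈ Finset.Icc 1 T, (M t).card := by
      apply Finset.sum_le_sum
      intro t ht
      apply hMmax t ht
      · intro a ha b hb hab
        exact hOmatch t ht a (Finset.mem_of_mem_filter a ha) b
          (Finset.mem_of_mem_filter b hb) hab
      · intro a ha
        exact (Finset.mem_filter.mp ha).2
    have part2 : (∑ t ∈ Finset.Icc 1 T,
        ((O t).filter (fun e => e ∉ (R (t - 1) + Edem t).toFinset)).card)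
        ≤ ∑ t ∈ Finset.Icc 1 T, (M t).card := by
      have cardf : ∀ t, ((O t).filter (fun e => e ∉ (R (t - 1) + Edem t).toFinset)).card
          = ∑ e ∈ Finset.univ, (if e ∈ O t ∧ e ∉ (R (t - 1) + Edem t).toFinset
              then 1 else 0) := by
        intro t
        rw [Finset.card_filter]
        rw [← Finset.sum_filter]
        rw [show ((O t).filter (fun e => e ∉ (R (t - 1) + Edem t).toFinset))
            = (Finset.univ.filter
              (fun e => e ∈ O t ∧ e ∉ (R (t - 1) + Edem t).toFinset)) by
          ext x; simp]
        rw [Finset.sum_filter]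
      have cardM : ∀ t, (M t).card
          = ∑ e ∈ Finset.univ, (if e ∈ M t then 1 else 0) := by
        intro t
        rw [Finset.sum_ite_mem, Finset.univ_inter, Finset.card_eq_sum_ones]
      calc (∑ t ∈ Finset.Icc 1 T,
            ((O t).filter (fun e => e ∉ (R (t - 1) + Edem t).toFinset)).card)
          = ∑ t ∈ Finset.Icc 1 T, ∑ e ∈ Finset.univ,
              (if e ∈ O t ∧ e ∉ (R (t - 1) + Edem t).toFinset then 1 else 0) :=
            Finset.sum_congr rfl fun t _ => cardf t
        _ = ∑ e ∈ Finset.univ, ∑ t ∈ Finset.Icc 1 T,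
              (if e ∈ O t ∧ e ∉ (R (t - 1) + Edem t).toFinset then 1 else 0) :=
            Finset.sum_comm
        _ ≤ ∑ e ∈ Finset.univ, ∑ t ∈ Finset.Icc 1 T, (if e ∈ M t then 1 else 0) :=
            Finset.sum_le_sum fun e _ => perEdge e
        _ = ∑ t ∈ Finset.Icc 1 T, ∑ e ∈ Finset.univ, (if e ∈ M t then 1 else 0) :=
            Finset.sum_comm
        _ = ∑ t ∈ Finset.Icc 1 T, (M t).card :=
            Finset.sum_congr rfl fun t _ => (cardM t).symm
    calc (∑ t ∈ Finset.Icc 1 T, (O t).card)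
        = (∑ t ∈ Finset.Icc 1 T,
            ((O t).filter (fun e => e ∈ (R (t - 1) + Edem t).toFinset)).card)
          + ∑ t ∈ Finset.Icc 1 T,
            ((O t).filter (fun e => e ∉ (R (t - 1) + Edem t).toFinset)).card := by
          rw [← Finset.sum_add_distrib]
          exact Finset.sum_congr rfl split
      _ ≤ 2 * ∑ t ∈ Finset.Icc 1 T, (M t).card := by omega
  -- conclude over ℝ
  have hcast : ((∑ t ∈ Finset.Icc 1 T, (O t).card : ℕ) : ℝ)
      ≤ ((2 * ∑ t ∈ Finset.Icc 1 T, (M t).card : ℕ) : ℝ) := Nat.cast_le.mpr main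
  push_cast at hcast
  linarith
end
end

section
/- Let E_1, …, E_T be arriving edge multisets, let O_1, …, O_T be a feasible solution, and let M_1 be any matching contained in the support of E_1. Consider the shortened instance Γ′ = (R′_2, E_3, …, E_T) of length T − 1, where R′_2 = (E_1 − M_1) + E_2 (multiset difference removes one copy of each edge of M_1). Then there exists a feasible solution O′_2, …, O′_T for Γ′ with Σ_{t=2}^T |O′_t| ≥ Σ_{t=2}^T |O_t| − |M_1|. -/
open Finset

noncomputable section
open scoped Classical

/-- A feasible solution for the instance given by the edge multisets `F 1, …, F m`:
a sequence of matchings such that at every time `t`, each edge has been sent at most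
as many times as it has arrived. -/
def FeasibleSol {A B : Type*} (F : ℕ → Multiset (A × B)) (m : ℕ)
    (O : ℕ → Finset (A × B)) : Prop :=
  (∀ t ∈ Finset.Icc 1 m, IsMatching (O t)) ∧
  ∀ t ∈ Finset.Icc 1 m, ∀ e : A × B,
    (∑ s ∈ Finset.Icc 1 t, if e ∈ O s then 1 else 0) ≤ (∑ s ∈ Finset.Icc 1 t, F s).count e


/-- the set of edges of `M₁` whose first occurrence (in times ≥ 2) is at time `s` -/
def Drop {A B : Type*} (O : ℕ → Finset (A × B)) (M₁ : Finset (A × B)) (s : ℕ) :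
    Finset (A × B) :=
  @Finset.filter _ (fun e => e ∈ M₁ ∧ ∀ s' ∈ Finset.Icc 2 (s - 1), e ∉ O s')
    (fun _ => Classical.propDecidable _) (O s)

lemma mem_Drop {A B : Type*} {O : ℕ → Finset (A × B)} {M₁ : Finset (A × B)} {s : ℕ}
    {e : A × B} : e ∈ Drop O M₁ s ↔
      e ∈ O s ∧ e ∈ M₁ ∧ ∀ s' ∈ Finset.Icc 2 (s - 1), e ∉ O s' :=
  @Finset.mem_filter _ _ (fun _ => Classical.propDecidable _) _ _

lemma Drop_subset {A B : Type*} (O : ℕ → Finset (A × B)) (M₁ : Finset (A × B)) (s : ℕ) :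
    Drop O M₁ s ⊆ O s := fun e he => (mem_Drop.mp he).1

lemma Drop_subset_M {A B : Type*} (O : ℕ → Finset (A × B)) (M₁ : Finset (A × B)) (s : ℕ) :
    Drop O M₁ s ⊆ M₁ := fun e he => (mem_Drop.mp he).2.1

lemma Drop_unique {A B : Type*} (O : ℕ → Finset (A × B)) (M₁ : Finset (A × B))
    {s s' : ℕ} (hs : 2 ≤ s) (hs' : 2 ≤ s') {e : A × B}
    (h : e ∈ Drop O M₁ s) (h' : e ∈ Drop O M₁ s') : s = s' := by
  by_contra hne
  rcases Nat.lt_or_ge s s' with hlt | hge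
  · exact (mem_Drop.mp h').2.2 s (by simp only [Finset.mem_Icc]; omega)
      (mem_Drop.mp h).1
  · have hlt : s' < s := by omega
    exact (mem_Drop.mp h).2.2 s' (by simp only [Finset.mem_Icc]; omega)
      (mem_Drop.mp h').1

/-- Removing a matching `M₁ ⊆ supp(E₁)` from the first arrival and merging the
remainder into the second arrival costs the optimum at most `|M₁|`: the shortened
instance `((E₁ − M₁) + E₂, E₃, …, E_T)` has a feasible solution of total size at
least `Σ_{t=2}^T |O_t| − |M₁|`. -/
theorem shortened_instance_optimum {A B : Type*} [Fintype A] [Fintype B]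
    (T : ℕ) (Edem : ℕ → Multiset (A × B))
    (O : ℕ → Finset (A × B)) (hO : FeasibleSol Edem T O)
    (M₁ : Finset (A × B)) (hM₁ : IsMatching M₁) (hM₁sub : M₁ ⊆ (Edem 1).toFinset) :
    ∃ O' : ℕ → Finset (A × B),
      FeasibleSol (fun j => if j = 1 then (Edem 1 - M₁.val) + Edem 2 else Edem (j + 1))
        (T - 1) O' ∧
      (∑ j ∈ Finset.Icc 1 (T - 1), ((O' j).card : ℝ)) ≥
        (∑ t ∈ Finset.Icc 2 T, ((O t).card : ℝ)) - M₁.card := by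
  classical
  obtain ⟨hmatch, hfeas⟩ := hO
  refine ⟨fun j => O (j + 1) \ Drop O M₁ (j + 1), ⟨?_, ?_⟩, ?_⟩
  · -- matchings
    intro t ht
    simp only [Finset.mem_Icc] at ht
    intro e he e' he' hne
    exact hmatch (t + 1) (by simp [Finset.mem_Icc]; omega) e (Finset.mem_sdiff.mp he).1
      e' (Finset.mem_sdiff.mp he').1 hne
  · -- feasibility counts
    intro t ht e
    simp only [Finset.mem_Icc] at ht
    have ht1 : t + 1 ≤ T := by omega
    -- budget identity
    have hbudget : (∑ s ∈ Finset.Icc 1 t,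
          (fun j => if j = 1 then (Edem 1 - M₁.val) + Edem 2 else Edem (j + 1)) s).count e
        = (∑ s ∈ Finset.Icc 1 (t + 1), Edem s).count e - (if e ∈ M₁ then 1 else 0) := by
      have hE1 : (if e ∈ M₁ then 1 else 0) ≤ (Edem 1).count e := by
        by_cases h : e ∈ M₁
        · simpa [h] using Multiset.one_le_count_iff_mem.mpr
            (Multiset.mem_toFinset.mp (hM₁sub h))
        · simp [h]
      have hcount1 : (Edem 1 - M₁.val).count e
          = (Edem 1).count e - (if e ∈ M₁ then 1 else 0) := by
        rw [Multiset.count_sub]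
        congr 1
        by_cases h : e ∈ M₁
        · simp [h, Multiset.count_eq_one_of_mem M₁.nodup h]
        · simp [h, Multiset.count_eq_zero_of_notMem (fun hc => h hc)]
      have hsplitL : Finset.Icc 1 t = insert 1 (Finset.Icc 2 t) := by
        ext x; simp only [Finset.mem_Icc, Finset.mem_insert]; omega
      have hsplitR : Finset.Icc 1 (t + 1) = insert 1 (insert 2 (Finset.Icc 3 (t + 1))) := by
        ext x; simp only [Finset.mem_Icc, Finset.mem_insert]; omega
      have hmid : (∑ s ∈ Finset.Icc 2 t, ((fun j => if j = 1 then (Edem 1 - M₁.val) + Edem 2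
            else Edem (j + 1)) s).count e)
          = ∑ s ∈ Finset.Icc 3 (t + 1), (Edem s).count e := by
        refine Finset.sum_nbij' (fun s => s + 1) (fun s => s - 1) ?_ ?_ ?_ ?_ ?_ <;>
          simp only [Finset.mem_Icc] <;> intro a ha
        · omega
        · omega
        · omega
        · omega
        · have : a ≠ 1 := by omega
          simp [this]
      rw [Multiset.count_sum', Multiset.count_sum', hsplitL, hsplitR,
        Finset.sum_insert (by simp), Finset.sum_insert (by simp),
        Finset.sum_insert (by simp [Finset.mem_Icc]), hmid]
      simp only [Multiset.count_add, hcount1, ite_true, if_true]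
      by_cases h : e ∈ M₁ <;> simp only [h, if_true, if_false] at hE1 ⊢ <;> omega
    rw [hbudget]
    -- reindex LHS
    have hL : (∑ s ∈ Finset.Icc 1 t, if e ∈ O (s + 1) \ Drop O M₁ (s + 1) then 1 else 0)
        = ∑ s ∈ Finset.Icc 2 (t + 1), if e ∈ O s \ Drop O M₁ s then 1 else 0 := by
      refine Finset.sum_nbij' (fun s => s + 1) (fun s => s - 1) ?_ ?_ ?_ ?_
        (fun s _ => rfl) <;> simp only [Finset.mem_Icc] <;> intros <;> omega
    rw [hL]
    have horig := hfeas (t + 1) (by simp only [Finset.mem_Icc]; omega) e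
    have hmono : (∑ s ∈ Finset.Icc 2 (t + 1), if e ∈ O s then 1 else 0)
        ≤ ∑ s ∈ Finset.Icc 1 (t + 1), if e ∈ O s then 1 else 0 :=
      Finset.sum_le_sum_of_subset (by intro x; simp [Finset.mem_Icc]; omega)
    by_cases heM : e ∈ M₁
    · simp only [heM, if_true]
      by_cases hex : ∃ s ∈ Finset.Icc 2 (t + 1), e ∈ O s
      · -- first occurrence is dropped
        set S := (Finset.Icc 2 (t + 1)).filter (fun s => e ∈ O s) with hS
        have hSne : S.Nonempty := by
          obtain ⟨s, hs, hes⟩ := hex; exact ⟨s, Finset.mem_filter.mpr ⟨hs, hes⟩⟩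
        set s₀ := S.min' hSne with hs₀
        have hs₀S : s₀ ∈ S := Finset.min'_mem _ _
        have hs₀Icc : s₀ ∈ Finset.Icc 2 (t + 1) := (Finset.mem_filter.mp hs₀S).1
        have hs₀O : e ∈ O s₀ := (Finset.mem_filter.mp hs₀S).2
        have hs₀D : e ∈ Drop O M₁ s₀ := by
          refine mem_Drop.mpr ⟨hs₀O, heM, ?_⟩
          intro s' hs' hes'
          simp only [Finset.mem_Icc] at hs' hs₀Icc
          have : s' ∈ S := Finset.mem_filter.mpr ⟨by simp [Finset.mem_Icc]; omega, hes'⟩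
          have := Finset.min'_le _ _ this
          omega
        have hlt : (∑ s ∈ Finset.Icc 2 (t + 1), if e ∈ O s \ Drop O M₁ s then 1 else 0)
            < ∑ s ∈ Finset.Icc 2 (t + 1), if e ∈ O s then (1:ℕ) else 0 := by
          refine Finset.sum_lt_sum (fun s _ => ?_) ⟨s₀, hs₀Icc, ?_⟩
          · by_cases h : e ∈ O s \ Drop O M₁ s
            · simp [h, (Finset.mem_sdiff.mp h).1]
            · simp only [h, if_false]; exact Nat.zero_le _
          · simp [Finset.mem_sdiff, hs₀O, hs₀D]
        omega
      · push_neg at hex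
        have : (∑ s ∈ Finset.Icc 2 (t + 1), if e ∈ O s \ Drop O M₁ s then 1 else 0) = 0 := by
          refine Finset.sum_eq_zero fun s hs => ?_
          simp [Finset.mem_sdiff, hex s hs]
        omega
    · simp only [heM, if_false, Nat.sub_zero]
      calc (∑ s ∈ Finset.Icc 2 (t + 1), if e ∈ O s \ Drop O M₁ s then 1 else 0)
          ≤ ∑ s ∈ Finset.Icc 2 (t + 1), if e ∈ O s then 1 else 0 := by
            refine Finset.sum_le_sum fun s _ => ?_
            by_cases h : e ∈ O s \ Drop O M₁ s
            · simp [h, (Finset.mem_sdiff.mp h).1]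
            · simp only [h, if_false]; exact Nat.zero_le _
        _ ≤ _ := le_trans hmono horig
  · -- cardinality bound
    have hdrop : (∑ j ∈ Finset.Icc 1 (T - 1), (Drop O M₁ (j + 1)).card) ≤ M₁.card := by
      have hcardD : ∀ s, (Drop O M₁ s).card
          = ∑ e ∈ M₁, if e ∈ Drop O M₁ s then 1 else 0 := by
        intro s
        rw [← Finset.card_filter]
        congr 1
        ext x
        simp only [Finset.mem_filter]
        exact ⟨fun h => ⟨Drop_subset_M O M₁ s h, h⟩, fun h => h.2⟩
      calc (∑ j ∈ Finset.Icc 1 (T - 1), (Drop O M₁ (j + 1)).card)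
          = ∑ e ∈ M₁, ∑ j ∈ Finset.Icc 1 (T - 1), if e ∈ Drop O M₁ (j + 1) then 1 else 0 := by
            rw [Finset.sum_comm]; exact Finset.sum_congr rfl fun j _ => hcardD _
        _ ≤ ∑ _e ∈ M₁, 1 := by
            refine Finset.sum_le_sum fun e _ => ?_
            rw [← Finset.card_filter]
            refine Finset.card_le_one.mpr fun a ha b hb => ?_
            simp only [Finset.mem_filter, Finset.mem_Icc] at ha hb
            have := Drop_unique O M₁ (s := a + 1) (s' := b + 1) (by omega) (by omega) ha.2 hb.2
            omega
        _ = M₁.card := by simp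
    have hsdiff : ∀ j, ((O (j + 1) \ Drop O M₁ (j + 1)).card : ℝ)
        = ((O (j + 1)).card : ℝ) - ((Drop O M₁ (j + 1)).card : ℝ) := by
      intro j
      rw [Finset.card_sdiff_of_subset (Drop_subset O M₁ (j + 1)),
        Nat.cast_sub (Finset.card_le_card (Drop_subset O M₁ (j + 1)))]
    have hre : (∑ j ∈ Finset.Icc 1 (T - 1), ((O (j + 1)).card : ℝ))
        = ∑ t ∈ Finset.Icc 2 T, ((O t).card : ℝ) := by
      refine Finset.sum_nbij' (fun s => s + 1) (fun s => s - 1) ?_ ?_ ?_ ?_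
        (fun s _ => rfl) <;> simp only [Finset.mem_Icc] <;> intros <;> omega
    have hdropR : (∑ j ∈ Finset.Icc 1 (T - 1), ((Drop O M₁ (j + 1)).card : ℝ))
        ≤ (M₁.card : ℝ) := by
      rw [← Nat.cast_sum]
      exact_mod_cast hdrop
    calc (∑ j ∈ Finset.Icc 1 (T - 1), ((O (j + 1) \ Drop O M₁ (j + 1)).card : ℝ))
        = (∑ j ∈ Finset.Icc 1 (T - 1), ((O (j + 1)).card : ℝ))
          - ∑ j ∈ Finset.Icc 1 (T - 1), ((Drop O M₁ (j + 1)).card : ℝ) := by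
          rw [← Finset.sum_sub_distrib]
          exact Finset.sum_congr rfl fun j _ => hsdiff j
      _ ≥ _ := by rw [hre]; linarith
end
end

section
/- Let k ≥ 3 be an integer, 0 < β ≤ 1, c = 1 − 2/k, and γ = β/(1 + cβ). Let s, s₁, o, o₁ be nonnegative reals satisfying s − s₁ ≥ cγ·(o − o₁ − s₁) and s₁ ≥ cβ·o₁. Then s ≥ cγ·o. -/
/-- The algebraic induction step in the analysis of the online circuit switch
scheduling algorithm: with `c = 1 − 2/k` and `γ = β/(1 + cβ)`, the inequalities
`s − s₁ ≥ cγ(o − o₁ − s₁)` and `s₁ ≥ cβ o₁` imply `s ≥ cγ o`. -/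
theorem online_induction_step (k : ℕ) (hk : 3 ≤ k) (β : ℝ) (hβ0 : 0 < β) (hβ1 : β ≤ 1)
    (c γ : ℝ) (hc : c = 1 - 2 / (k : ℝ)) (hγ : γ = β / (1 + c * β))
    (s s₁ o o₁ : ℝ) (hs : 0 ≤ s) (hs₁ : 0 ≤ s₁) (ho : 0 ≤ o) (ho₁ : 0 ≤ o₁)
    (h₁ : s - s₁ ≥ c * γ * (o - o₁ - s₁))
    (h₂ : s₁ ≥ c * β * o₁) :
    s ≥ c * γ * o := by
  have hk3 : (3 : ℝ) ≤ (k : ℝ) := by exact_mod_cast hk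
  have hkpos : (0 : ℝ) < (k : ℝ) := by linarith
  have hc0 : 0 < c := by
    rw [hc]
    have : 2 / (k : ℝ) ≤ 2 / 3 := by
      apply div_le_div_of_nonneg_left (by norm_num) (by norm_num) hk3
    linarith
  have hc1 : c < 1 := by
    rw [hc]
    have : 0 < 2 / (k : ℝ) := by positivity
    linarith
  have hden : 0 < 1 + c * β := by nlinarith
  have hγeq : γ * (1 + c * β) = β := by
    rw [hγ, div_mul_cancel₀ _ (ne_of_gt hden)]
  have hγ0 : 0 < γ := by rw [hγ]; positivity
  have hcγ1 : c * γ < 1 := by nlinarith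
  nlinarith [mul_nonneg hc0.le (mul_nonneg hγ0.le hs₁), mul_le_mul_of_nonneg_left h₂ (sub_nonneg.mpr hcγ1.le)]
end

section
/- Let W > 0, δ > 0 with δ < W, and 0 ≤ β ≤ 1. Suppose v is a real number with v ≥ β·sup{ f(S) : S a schedule feasible for window W − δ }. Then for every schedule O feasible for window W, v ≥ (1 − 2δ/W)·β·f(O). -/
open Finset

noncomputable section
open scoped Classical

/-- Base case of the online analysis: if `v` is at least `β` times the optimum value
over schedules feasible for window `W − δ`, then for every schedule `O` feasible for
window `W`, `v ≥ (1 − 2δ/W)·β·f(O)`. -/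
theorem online_base_case {A B : Type*} [Fintype A] [Fintype B]
    (D : A × B → ℝ) (hD : ∀ e, 0 ≤ D e)
    (δ W β v : ℝ) (hδ : 0 < δ) (hδW : δ < W) (hβ0 : 0 ≤ β) (hβ1 : β ≤ 1)
    (hv : v ≥ β * sSup {x : ℝ | ∃ S : Finset (Finset (A × B) × ℝ),
        ValidSchedule S ∧ totalTime δ S ≤ W - δ ∧ x = sentData D S}) :
    ∀ O : Finset (Finset (A × B) × ℝ), ValidSchedule O → totalTime δ O ≤ W →
      v ≥ (1 - 2 * δ / W) * β * sentData D O := by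
  intro O hOvalid hOtime
  have hW : 0 < W := lt_trans hδ hδW
  -- the sup set and basic facts about it
  set X : Set ℝ := {x : ℝ | ∃ S : Finset (Finset (A × B) × ℝ),
      ValidSchedule S ∧ totalTime δ S ≤ W - δ ∧ x = sentData D S} with hX
  have hbdd : BddAbove X := by
    refine ⟨∑ e : A × B, D e, ?_⟩
    rintro x ⟨S, -, -, rfl⟩
    exact Finset.sum_le_sum fun e _ => min_le_left _ _
  have hkey : ∀ S : Finset (Finset (A × B) × ℝ), ValidSchedule S →
      totalTime δ S ≤ W - δ → β * sentData D S ≤ v := by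
    intro S h1 h2
    refine le_trans ?_ hv
    exact mul_le_mul_of_nonneg_left (le_csSup hbdd ⟨S, h1, h2, rfl⟩) hβ0
  have hsentO_nonneg : 0 ≤ sentData D O := by
    refine Finset.sum_nonneg fun e _ => le_min (hD e) ?_
    exact Finset.sum_nonneg fun c hc => (hOvalid c (Finset.mem_filter.mp hc).1).2
  have hzero : (0:ℝ) ≤ v := by
    have h0 : sentData D (∅ : Finset (Finset (A × B) × ℝ)) = 0 := by
      unfold sentData
      refine Finset.sum_eq_zero fun e _ => ?_
      simp [min_eq_right (hD e)]
    have := hkey ∅ (fun c hc => absurd hc (Finset.notMem_empty c))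
      (by simp [totalTime]; linarith)
    rw [h0, mul_zero] at this
    exact this
  -- trivial case: 1 - 2δ/W ≤ 0
  by_cases htriv : 1 - 2 * δ / W ≤ 0
  · have : (1 - 2 * δ / W) * β * sentData D O ≤ 0 := by
      have h1 : (1 - 2 * δ / W) * β ≤ 0 := mul_nonpos_of_nonpos_of_nonneg htriv hβ0
      exact mul_nonpos_of_nonpos_of_nonneg h1 hsentO_nonneg
    linarith
  push_neg at htriv
  set t : ℝ := 1 - 2 * δ / W with htdef
  have ht1 : t ≤ 1 := by
    have h0 : 0 < 2 * δ / W := by positivity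
    rw [htdef]
    linarith
  have hsO : totalTime δ O = (∑ c ∈ O, c.2) + O.card * δ := by
    unfold totalTime
    rw [Finset.sum_add_distrib]
    simp [mul_comm]
  set s : ℝ := ∑ c ∈ O, c.2 with hsdef
  have hs0 : 0 ≤ s := Finset.sum_nonneg fun c hc => (hOvalid c hc).2
  by_cases hcase : (O.card : ℝ) * δ ≤ W / 2
  · -- scaling case
    set φ : Finset (A × B) × ℝ → Finset (A × B) × ℝ := fun c => (c.1, t * c.2) with hφ
    have hinj : ∀ x ∈ O, ∀ y ∈ O, φ x = φ y → x = y := by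
      intro x _ y _ hxy
      simp only [hφ, Prod.mk.injEq] at hxy
      exact Prod.ext hxy.1 (mul_left_cancel₀ (ne_of_gt htriv) hxy.2)
    set S' := O.image φ with hS'
    have hvalid' : ValidSchedule S' := by
      intro c hc
      obtain ⟨c', hc', rfl⟩ := Finset.mem_image.mp hc
      exact ⟨(hOvalid c' hc').1, mul_nonneg (le_of_lt htriv) (hOvalid c' hc').2⟩
    have htime' : totalTime δ S' ≤ W - δ := by
      unfold totalTime
      rw [hS', Finset.sum_image hinj]
      have : ∑ c ∈ O, ((φ c).2 + δ) = t * s + O.card * δ := by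
        simp only [hφ, hsdef]
        rw [Finset.sum_add_distrib, Finset.mul_sum]
        simp [mul_comm]
      rw [this]
      have hsle : s ≤ W - O.card * δ := by
        have := hOtime; rw [hsO] at this; linarith
      have htW : t * W = W - 2 * δ := by rw [htdef]; field_simp
      nlinarith [mul_nonneg (sub_nonneg.mpr ht1) (sub_nonneg.mpr hcase),
        mul_nonneg (le_of_lt htriv) (sub_nonneg.mpr hsle), htW]
    have hsent' : t * sentData D O ≤ sentData D S' := by
      unfold sentData
      rw [Finset.mul_sum]
      refine Finset.sum_le_sum fun e _ => ?_
      have hfilt : S'.filter (fun c => e ∈ c.1) =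
          (O.filter (fun c => e ∈ c.1)).image φ := by
        rw [hS', Finset.filter_image]
      have hinj' : ∀ x ∈ O.filter (fun c => e ∈ c.1), ∀ y ∈ O.filter (fun c => e ∈ c.1),
          φ x = φ y → x = y := fun x hx y hy =>
        hinj x (Finset.mem_filter.mp hx).1 y (Finset.mem_filter.mp hy).1
      have hsum : ∑ c ∈ S'.filter (fun c => e ∈ c.1), c.2 =
          t * ∑ c ∈ O.filter (fun c => e ∈ c.1), c.2 := by
        rw [hfilt, Finset.sum_image hinj', Finset.mul_sum]
      rw [hsum]
      set T := ∑ c ∈ O.filter (fun c => e ∈ c.1), c.2 with hT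
      have hT0 : 0 ≤ T :=
        Finset.sum_nonneg fun c hc => (hOvalid c (Finset.mem_filter.mp hc).1).2
      have hmin0 : 0 ≤ min (D e) T := le_min (hD e) hT0
      refine le_min ?_ ?_
      · calc t * min (D e) T ≤ 1 * min (D e) T :=
              mul_le_mul_of_nonneg_right ht1 hmin0
          _ = min (D e) T := one_mul _
          _ ≤ D e := min_le_left _ _
      · exact mul_le_mul_of_nonneg_left (min_le_right _ _) (le_of_lt htriv)
    have := hkey S' hvalid' htime'
    have h2 : β * (t * sentData D O) ≤ β * sentData D S' :=
      mul_le_mul_of_nonneg_left hsent' hβ0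
    calc (1 - 2 * δ / W) * β * sentData D O = β * (t * sentData D O) := by ring
      _ ≤ β * sentData D S' := h2
      _ ≤ v := this
  · -- dropping case: many configurations
    push_neg at hcase
    have hne : O.Nonempty := by
      rcases Finset.eq_empty_or_nonempty O with h | h
      · exfalso; rw [h] at hcase; simp at hcase; linarith
      · exact h
    have hn1 : (1:ℝ) ≤ O.card := by
      exact_mod_cast Finset.card_pos.mpr hne
    -- average loss bound
    have hloss : ∑ c₀ ∈ O, (sentData D O - sentData D (O.erase c₀)) ≤ sentData D O := by
      have hexp : ∀ c₀ ∈ O, sentData D O - sentData D (O.erase c₀) =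
          ∑ e : A × B, (min (D e) (∑ c ∈ O.filter (fun c => e ∈ c.1), c.2)
            - min (D e) (∑ c ∈ (O.erase c₀).filter (fun c => e ∈ c.1), c.2)) := by
        intro c₀ _
        unfold sentData
        rw [Finset.sum_sub_distrib]
      calc ∑ c₀ ∈ O, (sentData D O - sentData D (O.erase c₀))
          = ∑ c₀ ∈ O, ∑ e : A × B, (min (D e) (∑ c ∈ O.filter (fun c => e ∈ c.1), c.2)
            - min (D e) (∑ c ∈ (O.erase c₀).filter (fun c => e ∈ c.1), c.2)) :=
            Finset.sum_congr rfl hexp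
        _ = ∑ e : A × B, ∑ c₀ ∈ O, (min (D e) (∑ c ∈ O.filter (fun c => e ∈ c.1), c.2)
            - min (D e) (∑ c ∈ (O.erase c₀).filter (fun c => e ∈ c.1), c.2)) :=
            Finset.sum_comm
        _ ≤ ∑ e : A × B, min (D e) (∑ c ∈ O.filter (fun c => e ∈ c.1), c.2) := by
            refine Finset.sum_le_sum fun e _ => ?_
            set F := O.filter (fun c => e ∈ c.1) with hF
            set T := ∑ c ∈ F, c.2 with hT
            have hwpos : ∀ c ∈ F, 0 ≤ c.2 :=
              fun c hc => (hOvalid c (Finset.mem_filter.mp hc).1).2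
            have hT0 : 0 ≤ T := Finset.sum_nonneg hwpos
            have hmin0 : 0 ≤ min (D e) T := le_min (hD e) hT0
            -- rewrite each inner sum
            have hrw : ∀ c₀ ∈ O, ∑ c ∈ (O.erase c₀).filter (fun c => e ∈ c.1), c.2 =
                if c₀ ∈ F then T - c₀.2 else T := by
              intro c₀ _
              rw [Finset.filter_erase]
              by_cases hmem : c₀ ∈ F
              · rw [if_pos hmem, ← hF, Finset.sum_erase_eq_sub hmem, hT]
              · rw [if_neg hmem, ← hF, Finset.erase_eq_of_notMem hmem, hT]
            calc ∑ c₀ ∈ O, (min (D e) T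
                  - min (D e) (∑ c ∈ (O.erase c₀).filter (fun c => e ∈ c.1), c.2))
                = ∑ c₀ ∈ O, (min (D e) T
                  - min (D e) (if c₀ ∈ F then T - c₀.2 else T)) := by
                  refine Finset.sum_congr rfl fun c₀ hc₀ => ?_
                  rw [hrw c₀ hc₀]
              _ = ∑ c₀ ∈ F, (min (D e) T - min (D e) (T - c₀.2)) := by
                  rw [← Finset.sum_filter_add_sum_filter_not O (fun c => e ∈ c.1)]
                  have hz : ∑ c₀ ∈ O.filter (fun c => ¬ e ∈ c.1),
                      (min (D e) T - min (D e) (if c₀ ∈ F then T - c₀.2 else T)) = 0 := by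
                    refine Finset.sum_eq_zero fun c₀ hc₀ => ?_
                    have : c₀ ∉ F := by
                      rw [hF]
                      intro h
                      exact (Finset.mem_filter.mp hc₀).2 (Finset.mem_filter.mp h).2
                    rw [if_neg this, sub_self]
                  rw [hz, add_zero, ← hF]
                  refine Finset.sum_congr rfl fun c₀ hc₀ => ?_
                  rw [if_pos hc₀]
              _ ≤ min (D e) T := by
                  rcases eq_or_lt_of_le hT0 with hTeq | hTpos
                  · -- T = 0 : every term vanishes
                    have hTz : T = 0 := hTeq.symm
                    have : ∀ c₀ ∈ F, min (D e) T - min (D e) (T - c₀.2) = 0 := by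
                      intro c₀ hc₀
                      have h1 : c₀.2 ≤ T := Finset.single_le_sum hwpos hc₀
                      have h2 : 0 ≤ c₀.2 := hwpos c₀ hc₀
                      have : c₀.2 = 0 := le_antisymm (by linarith) h2
                      rw [this, sub_zero, sub_self]
                    rw [Finset.sum_eq_zero this]
                    exact hmin0
                  · -- T > 0 : concavity bound per term
                    have hstep : ∀ c₀ ∈ F, min (D e) T - min (D e) (T - c₀.2)
                        ≤ c₀.2 / T * min (D e) T := by
                      intro c₀ hc₀
                      have h1 : c₀.2 ≤ T := Finset.single_le_sum hwpos hc₀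
                      have h2 : 0 ≤ c₀.2 := hwpos c₀ hc₀
                      have hx0 : 0 ≤ T - c₀.2 := by linarith
                      have hkey2 : (T - c₀.2) / T * min (D e) T ≤ min (D e) (T - c₀.2) := by
                        refine le_min ?_ ?_
                        · have : (T - c₀.2) / T ≤ 1 := by
                            rw [div_le_one hTpos]; linarith
                          calc (T - c₀.2) / T * min (D e) T ≤ 1 * min (D e) T :=
                                mul_le_mul_of_nonneg_right this hmin0
                            _ = min (D e) T := one_mul _
                            _ ≤ D e := min_le_left _ _
                        · calc (T - c₀.2) / T * min (D e) T
                              ≤ (T - c₀.2) / T * T :=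
                                mul_le_mul_of_nonneg_left (min_le_right _ _)
                                  (by positivity)
                            _ = T - c₀.2 := by field_simp
                      have hexpand : c₀.2 / T * min (D e) T =
                          min (D e) T - (T - c₀.2) / T * min (D e) T := by
                        field_simp; ring
                      rw [hexpand]
                      linarith
                    calc ∑ c₀ ∈ F, (min (D e) T - min (D e) (T - c₀.2))
                        ≤ ∑ c₀ ∈ F, c₀.2 / T * min (D e) T :=
                          Finset.sum_le_sum hstep
                      _ = (∑ c₀ ∈ F, c₀.2) / T * min (D e) T := by
                          rw [Finset.sum_div, Finset.sum_mul]
                      _ = min (D e) T := by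
                          rw [← hT, div_self (ne_of_gt hTpos), one_mul]
        _ = sentData D O := rfl
    -- pick the configuration with the smallest loss
    have havg : ∃ c₀ ∈ O, sentData D O - sentData D (O.erase c₀)
        ≤ sentData D O / O.card := by
      refine Finset.exists_le_of_sum_le hne ?_
      have : ∑ _c₀ ∈ O, sentData D O / O.card = sentData D O := by
        rw [Finset.sum_const, nsmul_eq_mul]
        field_simp
      rw [this]
      exact hloss
    obtain ⟨c₀, hc₀O, hc₀⟩ := havg
    have hvalidE : ValidSchedule (O.erase c₀) :=
      fun c hc => hOvalid c (Finset.mem_of_mem_erase hc)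
    have htimeE : totalTime δ (O.erase c₀) ≤ W - δ := by
      unfold totalTime
      rw [Finset.sum_erase_eq_sub hc₀O]
      have h2 : 0 ≤ c₀.2 := (hOvalid c₀ hc₀O).2
      have : totalTime δ O = ∑ c ∈ O, (c.2 + δ) := rfl
      linarith [hOtime, this ▸ hOtime]
    have hsentE : t * sentData D O ≤ sentData D (O.erase c₀) := by
      have hnpos : (0:ℝ) < O.card := by linarith
      have hdivle : sentData D O / O.card ≤ 2 * δ / W * sentData D O := by
        have hfrac : (1:ℝ) / O.card ≤ 2 * δ / W := by
          rw [div_le_div_iff₀ hnpos hW]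
          linarith [hcase]
        calc sentData D O / O.card = 1 / O.card * sentData D O := by ring
          _ ≤ 2 * δ / W * sentData D O :=
            mul_le_mul_of_nonneg_right hfrac hsentO_nonneg
      have : sentData D O - 2 * δ / W * sentData D O ≤ sentData D (O.erase c₀) := by
        linarith
      calc t * sentData D O = sentData D O - 2 * δ / W * sentData D O := by
            rw [htdef]; ring
        _ ≤ sentData D (O.erase c₀) := this
    have := hkey (O.erase c₀) hvalidE htimeE
    have h2 : β * (t * sentData D O) ≤ β * sentData D (O.erase c₀) :=
      mul_le_mul_of_nonneg_left hsentE hβ0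
    calc (1 - 2 * δ / W) * β * sentData D O = β * (t * sentData D O) := by ring
      _ ≤ β * sentData D (O.erase c₀) := h2
      _ ≤ v := this
end
end
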